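/- Let q, k be real with 0 < q < 1 and 0 < k < 1, let n ∈ ℕ, and let λ_1, λ_2 ∈ ℂ satisfy Re(λ_2 − λ_1) + n > 0. Let R be real with q^{(1−k)/2} < R < q^{(k−1)/2}. Then the contour integrals over shrinking circles tend to zero: lim_{N → ∞} (1/(2πi)) ∮_{|y| = q^N R} y^n · [Θ_q(q^{λ_2−λ_1+(k+1)/2}/y) / Θ_q(q^{(1+k)/2}/y)] · [(q^{(1+k)/2}/y ; q)_∞ / (q^{(1−k)/2}/y ; q)_∞] · dy/y = 0. -/

import Mathlib

/-- `q^x := exp(x·log q)` for real `q > 0` and complex `x`. -/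
noncomputable def qpow (q : ℝ) (x : ℂ) : ℂ := Complex.exp (x * Real.log q)

/-- The q-Pochhammer symbol `(z;q)_∞ = ∏_{i=0}^∞ (1 - z qⁱ)`. -/
noncomputable def qPochInf (q : ℝ) (z : ℂ) : ℂ := ∏' i : ℕ, (1 - z * (q : ℂ) ^ i)

/-- `Θ_q(z) = (z;q)_∞ (q z⁻¹;q)_∞ (q;q)_∞`. -/
noncomputable def qTheta (q : ℝ) (z : ℂ) : ℂ :=
  qPochInf q z * qPochInf q ((q : ℂ) * z⁻¹) * qPochInf q (q : ℂ)

/-!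
On `|y| = q^N R` write `y = q^N u` with `|u| = R`, and put `a = q^(λ₂-λ₁+(1+k)/2)`,
`b = q^((1+k)/2)`, `c = q^((1-k)/2)`. The functional equation `Θ_q(z/q) = -(z/q) Θ_q(z)` makes
the theta quotient pick up exactly `(a/b)^N`, of modulus `q^(N Re(λ₂-λ₁))`, while
`(z/q;q)_∞ = (1 - z/q)(z;q)_∞` makes the Pochhammer quotient pick up `(b/c)^N` times the finite
product `∏_{j<N} (1 - (qu/b) q^j) / (1 - (qu/c) q^j)`, which stays bounded since `|qu/c| < 1`.
What remains lives on the fixed circle `|u| = R`, where `exp` bounds on `(z;q)_∞` keep it bounded: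
the bounds `q^((1-k)/2) < R < q^((k-1)/2)` keep `|b/u|`, `|c/u|` and `|qu/b|` below `1`, so no
denominator comes near zero. Hence the integrals are `O(q^(N (Re(λ₂-λ₁) + n)))`.
-/

open Complex Filter Finset

section QPochhammer

variable {q : ℝ}

theorem multipliable_one_sub_mul_pow (hq0 : 0 ≤ q) (hq1 : q < 1) (z : ℂ) :
    Multipliable fun i : ℕ => 1 - z * (q : ℂ) ^ i := by
  have hs : Summable fun i : ℕ => ‖-(z * (q : ℂ) ^ i)‖ := by
    simpa [abs_of_nonneg hq0] using (summable_geometric_of_lt_one hq0 hq1).mul_left ‖z‖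
  simpa [sub_eq_add_neg] using multipliable_one_add_of_summable hs

theorem qPochInf_eq_one_sub_mul (hq0 : 0 ≤ q) (hq1 : q < 1) (z : ℂ) :
    qPochInf q z = (1 - z) * qPochInf q (z * q) := by
  have hshift : ∀ i : ℕ, 1 - z * q * (q : ℂ) ^ i = 1 - z * (q : ℂ) ^ (i + 1) := fun i => by
    ring
  rw [qPochInf, qPochInf, tprod_congr hshift,
    tprod_eq_zero_mul' ((multipliable_one_sub_mul_pow hq0 hq1 (z * q)).congr hshift)]
  simp

theorem qPochInf_div_q (hq0 : 0 < q) (hq1 : q < 1) (z : ℂ) :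
    qPochInf q (z / q) = (1 - z / q) * qPochInf q z := by
  rw [qPochInf_eq_one_sub_mul hq0.le hq1, div_mul_cancel₀ _ (ofReal_ne_zero.2 hq0.ne')]

theorem qTheta_div_q (hq0 : 0 < q) (hq1 : q < 1) {z : ℂ} (hz : z ≠ 0) :
    qTheta q (z / q) = -(z / q) * qTheta q z := by
  have hq : (q : ℂ) ≠ 0 := ofReal_ne_zero.2 hq0.ne'
  have hinv : (q : ℂ) * (z / q)⁻¹ = q * z⁻¹ * q := by field_simp
  have hfactor : 1 - z / q = -(z / q) * (1 - q * z⁻¹) := by field_simp; ring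
  rw [qTheta, qTheta, qPochInf_div_q hq0 hq1, hinv, qPochInf_eq_one_sub_mul hq0.le hq1 (q * z⁻¹),
    hfactor]
  ring

theorem qTheta_div_pow_div_qTheta_div_pow (hq0 : 0 < q) (hq1 : q < 1) {z w : ℂ} (hz : z ≠ 0)
    (hw : w ≠ 0) (N : ℕ) :
    qTheta q (z / (q : ℂ) ^ N) / qTheta q (w / (q : ℂ) ^ N) =
      (z / w) ^ N * (qTheta q z / qTheta q w) := by
  have hq : (q : ℂ) ≠ 0 := ofReal_ne_zero.2 hq0.ne'
  induction N with
  | zero => simp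
  | succ N ih =>
    rw [pow_succ, ← div_div, ← div_div, qTheta_div_q hq0 hq1 (by simp [hz, hq]),
      qTheta_div_q hq0 hq1 (by simp [hw, hq]), mul_div_mul_comm, ih,
      show -(z / q ^ N / q) / -(w / q ^ N / q) = z / w by field_simp, pow_succ]
    ring

theorem qPochInf_div_pow_div_qPochInf_div_pow (hq0 : 0 < q) (hq1 : q < 1) {z w : ℂ} (hz : z ≠ 0)
    (hw : w ≠ 0) (N : ℕ) :
    qPochInf q (z / (q : ℂ) ^ N) / qPochInf q (w / (q : ℂ) ^ N) =
      (z / w) ^ N * (∏ j ∈ range N, (1 - q / z * (q : ℂ) ^ j) / (1 - q / w * (q : ℂ) ^ j)) *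
        (qPochInf q z / qPochInf q w) := by
  have hq : (q : ℂ) ≠ 0 := ofReal_ne_zero.2 hq0.ne'
  induction N with
  | zero => simp
  | succ N ih =>
    have hfactor : ∀ x : ℂ, x ≠ 0 →
        1 - x / q ^ N / q = -(x / q ^ (N + 1)) * (1 - q / x * q ^ N) :=
      fun x hx => by field_simp; ring
    rw [pow_succ, ← div_div, ← div_div, qPochInf_div_q hq0 hq1, qPochInf_div_q hq0 hq1,
      mul_div_mul_comm, ih, hfactor z hz, hfactor w hw, mul_div_mul_comm,
      show -(z / q ^ (N + 1)) / -(w / q ^ (N + 1)) = z / w by field_simp, prod_range_succ, pow_succ]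
    ring

end QPochhammer

theorem exp_neg_div_le_one_sub {t x : ℝ} (ht : 0 ≤ t) (htx : t ≤ x) (hx : x < 1) :
    Real.exp (-(t / (1 - x))) ≤ 1 - t := by
  have hs : 0 ≤ t / (1 - x) := div_nonneg ht (by linarith)
  calc Real.exp (-(t / (1 - x))) = (Real.exp (t / (1 - x)))⁻¹ := Real.exp_neg _
    _ ≤ (t / (1 - x) + 1)⁻¹ := inv_anti₀ (by positivity) (Real.add_one_le_exp _)
    _ ≤ 1 - t := by
      rw [inv_le_iff_one_le_mul₀ (by positivity)]
      rw [div_add_one (by linarith), mul_div_assoc', le_div_iff₀ (by linarith)]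
      nlinarith

section Bounds

variable {q : ℝ}

theorem sum_mul_pow_le_div_one_sub (hq0 : 0 ≤ q) (hq1 : q < 1) {c : ℝ} (hc : 0 ≤ c)
    (s : Finset ℕ) : ∑ i ∈ s, c * q ^ i ≤ c / (1 - q) := by
  rw [div_eq_mul_inv, ← tsum_geometric_of_lt_one hq0 hq1, ← tsum_mul_left]
  exact ((summable_geometric_of_lt_one hq0 hq1).mul_left c).sum_le_tsum s
    fun i _ => by positivity

theorem norm_mul_ofReal_pow (hq0 : 0 ≤ q) (z : ℂ) (i : ℕ) : ‖z * (q : ℂ) ^ i‖ = ‖z‖ * q ^ i := by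
  simp [abs_of_nonneg hq0]

theorem prod_norm_one_sub_mul_pow_le_exp (hq0 : 0 ≤ q) (hq1 : q < 1) {z : ℂ} {m : ℝ}
    (hz : ‖z‖ ≤ m) (s : Finset ℕ) :
    ∏ i ∈ s, ‖1 - z * (q : ℂ) ^ i‖ ≤ Real.exp (m / (1 - q)) := by
  have hm : 0 ≤ m := (norm_nonneg z).trans hz
  calc ∏ i ∈ s, ‖1 - z * (q : ℂ) ^ i‖ ≤ ∏ i ∈ s, (1 + m * q ^ i) := by
        refine prod_le_prod (fun _ _ => norm_nonneg _) fun i _ => (norm_sub_le _ _).trans ?_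
        rw [norm_one, norm_mul_ofReal_pow hq0]
        gcongr
    _ ≤ Real.exp (∑ i ∈ s, m * q ^ i) := Real.prod_one_add_le_exp_sum s fun i => by positivity
    _ ≤ Real.exp (m / (1 - q)) := by gcongr; exact sum_mul_pow_le_div_one_sub hq0 hq1 hm s

theorem exp_neg_le_prod_norm_one_sub_mul_pow (hq0 : 0 ≤ q) (hq1 : q < 1) {z : ℂ} {m : ℝ}
    (hz : ‖z‖ ≤ m) (hm1 : m < 1) (s : Finset ℕ) :
    Real.exp (-(m / (1 - m) / (1 - q))) ≤ ∏ i ∈ s, ‖1 - z * (q : ℂ) ^ i‖ := by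
  have hm : 0 ≤ m := (norm_nonneg z).trans hz
  have hmq : ∀ i : ℕ, m * q ^ i ≤ m := fun i => mul_le_of_le_one_right hm (pow_le_one₀ hq0 hq1.le)
  calc Real.exp (-(m / (1 - m) / (1 - q)))
      ≤ Real.exp (∑ i ∈ s, -(m * q ^ i / (1 - m))) := by
        gcongr
        rw [sum_neg_distrib, neg_le_neg_iff]
        simp_rw [← div_mul_eq_mul_div]
        exact sum_mul_pow_le_div_one_sub hq0 hq1 (div_nonneg hm (by linarith)) s
    _ = ∏ i ∈ s, Real.exp (-(m * q ^ i / (1 - m))) := Real.exp_sum _ _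
    _ ≤ ∏ i ∈ s, (1 - m * q ^ i) :=
        prod_le_prod (fun _ _ => (Real.exp_pos _).le) fun i _ =>
          exp_neg_div_le_one_sub (by positivity) (hmq i) hm1
    _ ≤ ∏ i ∈ s, ‖1 - z * (q : ℂ) ^ i‖ := by
        refine prod_le_prod (fun i _ => by linarith [hmq i]) fun i _ => ?_
        refine le_trans ?_ (norm_sub_norm_le _ _)
        rw [norm_one, norm_mul_ofReal_pow hq0]
        gcongr

theorem norm_qPochInf_le_exp (hq0 : 0 ≤ q) (hq1 : q < 1) {z : ℂ} {m : ℝ} (hz : ‖z‖ ≤ m) :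
    ‖qPochInf q z‖ ≤ Real.exp (m / (1 - q)) :=
  le_of_tendsto' (multipliable_one_sub_mul_pow hq0 hq1 z).hasProd.norm
    (prod_norm_one_sub_mul_pow_le_exp hq0 hq1 hz)

theorem exp_neg_le_norm_qPochInf (hq0 : 0 ≤ q) (hq1 : q < 1) {z : ℂ} {m : ℝ} (hz : ‖z‖ ≤ m)
    (hm1 : m < 1) : Real.exp (-(m / (1 - m) / (1 - q))) ≤ ‖qPochInf q z‖ :=
  ge_of_tendsto' (multipliable_one_sub_mul_pow hq0 hq1 z).hasProd.norm
    (exp_neg_le_prod_norm_one_sub_mul_pow hq0 hq1 hz hm1)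

theorem norm_ofReal_mul_inv (hq0 : 0 ≤ q) (z : ℂ) : ‖(q : ℂ) * z⁻¹‖ = q / ‖z‖ := by
  simp [abs_of_nonneg hq0, div_eq_mul_inv]

theorem exists_norm_qTheta_le (hq0 : 0 ≤ q) (hq1 : q < 1) (ρ : ℝ) :
    ∃ C, ∀ z : ℂ, ‖z‖ = ρ → ‖qTheta q z‖ ≤ C := by
  refine ⟨Real.exp (ρ / (1 - q)) * Real.exp (q / ρ / (1 - q)) * Real.exp (q / (1 - q)),
    fun z hz => ?_⟩
  rw [qTheta, norm_mul, norm_mul]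
  gcongr
  · exact norm_qPochInf_le_exp hq0 hq1 hz.le
  · exact norm_qPochInf_le_exp hq0 hq1 (by rw [norm_ofReal_mul_inv hq0, hz])
  · exact norm_qPochInf_le_exp hq0 hq1 (by simp [abs_of_nonneg hq0])

theorem exists_pos_le_norm_qTheta (hq0 : 0 < q) (hq1 : q < 1) {ρ : ℝ} (hρ1 : ρ < 1)
    (hqρ : q < ρ) : ∃ c > 0, ∀ z : ℂ, ‖z‖ = ρ → c ≤ ‖qTheta q z‖ := by
  have hqρ1 : q / ρ < 1 := (div_lt_one (hq0.trans hqρ)).2 hqρ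
  refine ⟨Real.exp (-(ρ / (1 - ρ) / (1 - q))) * Real.exp (-(q / ρ / (1 - q / ρ) / (1 - q))) *
    Real.exp (-(q / (1 - q) / (1 - q))), by positivity, fun z hz => ?_⟩
  rw [qTheta, norm_mul, norm_mul]
  gcongr
  · exact exp_neg_le_norm_qPochInf hq0.le hq1 hz.le hρ1
  · exact exp_neg_le_norm_qPochInf hq0.le hq1 (by rw [norm_ofReal_mul_inv hq0.le, hz]) hqρ1
  · exact exp_neg_le_norm_qPochInf hq0.le hq1 (by simp [abs_of_nonneg hq0.le]) hq1

end Bounds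

section ShrinkingCircles

variable {q : ℝ}

theorem norm_div_ofReal_pow (hq0 : 0 < q) {y : ℂ} {N : ℕ} {R : ℝ} (hy : ‖y‖ = q ^ N * R) :
    ‖y / (q : ℂ) ^ N‖ = R := by
  rw [norm_div, hy, norm_pow, norm_real, Real.norm_of_nonneg hq0.le]
  field_simp

theorem div_eq_div_div_ofReal_pow (hq0 : 0 < q) (z y : ℂ) (N : ℕ) :
    z / y = z / (y / (q : ℂ) ^ N) / (q : ℂ) ^ N := by
  rw [div_div, div_mul_cancel₀ _ (pow_ne_zero _ (ofReal_ne_zero.2 hq0.ne'))]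

theorem exists_norm_qTheta_div_qTheta_le (hq0 : 0 < q) (hq1 : q < 1) {a b : ℂ} {R : ℝ}
    (ha : a ≠ 0) (hbR : ‖b‖ < R) (hqRb : q * R < ‖b‖) :
    ∃ C, ∀ N : ℕ, ∀ y : ℂ, ‖y‖ = q ^ N * R →
      ‖qTheta q (a / y) / qTheta q (b / y)‖ ≤ (‖a‖ / ‖b‖) ^ N * C := by
  have hR : 0 < R := (norm_nonneg b).trans_lt hbR
  have hb : b ≠ 0 := norm_pos_iff.1 ((mul_pos hq0 hR).trans hqRb)
  obtain ⟨C, hC⟩ := exists_norm_qTheta_le hq0.le hq1 (‖a‖ / R)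
  obtain ⟨c, hc, hc'⟩ := exists_pos_le_norm_qTheta hq0 hq1 (ρ := ‖b‖ / R)
    ((div_lt_one hR).2 hbR) ((lt_div_iff₀ hR).2 hqRb)
  refine ⟨C / c, fun N y hy => ?_⟩
  have hu := norm_div_ofReal_pow hq0 hy
  have hu0 : y / (q : ℂ) ^ N ≠ 0 := norm_pos_iff.1 (hu ▸ hR)
  rw [div_eq_div_div_ofReal_pow hq0 a y N, div_eq_div_div_ofReal_pow hq0 b y N,
    qTheta_div_pow_div_qTheta_div_pow hq0 hq1 (div_ne_zero ha hu0) (div_ne_zero hb hu0),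
    div_div_div_cancel_right₀ hu0, norm_mul, norm_pow, norm_div, norm_div]
  have hA := hC (a / (y / (q : ℂ) ^ N)) (by rw [norm_div, hu])
  have hB := hc' (b / (y / (q : ℂ) ^ N)) (by rw [norm_div, hu])
  exact mul_le_mul_of_nonneg_left (div_le_div₀ ((norm_nonneg _).trans hA) hA hc hB) (by positivity)

theorem exists_norm_qPochInf_div_qPochInf_le (hq0 : 0 < q) (hq1 : q < 1) {b c : ℂ} {R : ℝ}
    (hcR : ‖c‖ < R) (hqRb : q * R < ‖b‖) (hbc : ‖b‖ ≤ ‖c‖) :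
    ∃ C, ∀ N : ℕ, ∀ y : ℂ, ‖y‖ = q ^ N * R →
      ‖qPochInf q (b / y) / qPochInf q (c / y)‖ ≤ C := by
  have hR : 0 < R := (norm_nonneg c).trans_lt hcR
  have hb : b ≠ 0 := norm_pos_iff.1 ((mul_pos hq0 hR).trans hqRb)
  have hc : c ≠ 0 := norm_pos_iff.1 ((norm_pos_iff.2 hb).trans_le hbc)
  have hcR1 : ‖c‖ / R < 1 := (div_lt_one hR).2 hcR
  have hqRc1 : q * R / ‖c‖ < 1 := (div_lt_one (norm_pos_iff.2 hc)).2 (hqRb.trans_le hbc)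
  refine ⟨Real.exp (q * R / ‖b‖ / (1 - q)) / Real.exp (-(q * R / ‖c‖ / (1 - q * R / ‖c‖) / (1 - q)))
    * (Real.exp (‖b‖ / R / (1 - q)) / Real.exp (-(‖c‖ / R / (1 - ‖c‖ / R) / (1 - q)))),
    fun N y hy => ?_⟩
  have hu := norm_div_ofReal_pow hq0 hy
  have hu0 : y / (q : ℂ) ^ N ≠ 0 := norm_pos_iff.1 (hu ▸ hR)
  have hnorm : ∀ x : ℂ, ‖(q : ℂ) / (x / (y / (q : ℂ) ^ N))‖ = q * R / ‖x‖ := fun x => by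
    rw [norm_div, norm_div, hu, norm_real, Real.norm_of_nonneg hq0.le, div_div_eq_mul_div]
  rw [div_eq_div_div_ofReal_pow hq0 b y N, div_eq_div_div_ofReal_pow hq0 c y N,
    qPochInf_div_pow_div_qPochInf_div_pow hq0 hq1 (div_ne_zero hb hu0) (div_ne_zero hc hu0),
    div_div_div_cancel_right₀ hu0, norm_mul, norm_mul, norm_pow, norm_prod]
  simp_rw [norm_div, prod_div_distrib]
  have hprod := div_le_div₀ (Real.exp_pos _).le
    (prod_norm_one_sub_mul_pow_le_exp hq0.le hq1 (hnorm b).le (range N)) (Real.exp_pos _)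
    (exp_neg_le_prod_norm_one_sub_mul_pow hq0.le hq1 (hnorm c).le hqRc1 (range N))
  have hpoch := div_le_div₀ (Real.exp_pos _).le
    (norm_qPochInf_le_exp hq0.le hq1 (z := b / (y / (q : ℂ) ^ N)) (by rw [norm_div, hu]))
    (Real.exp_pos _)
    (exp_neg_le_norm_qPochInf hq0.le hq1 (z := c / (y / (q : ℂ) ^ N)) (by rw [norm_div, hu]) hcR1)
  have hratio : (‖b‖ / ‖c‖) ^ N ≤ 1 :=
    pow_le_one₀ (by positivity) (div_le_one_of_le₀ hbc (norm_nonneg _))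
  refine le_trans ?_ (mul_le_mul hprod hpoch (by positivity) (by positivity))
  gcongr ?_ * _
  exact mul_le_of_le_one_left (by positivity) hratio

end ShrinkingCircles

theorem exists_norm_integrand_le {q : ℝ} (hq0 : 0 < q) (hq1 : q < 1) (n : ℕ) {a b c : ℂ}
    {R : ℝ} (ha : a ≠ 0) (hbR : ‖b‖ < R) (hqRb : q * R < ‖b‖) (hcR : ‖c‖ < R)
    (hbc : ‖b‖ ≤ ‖c‖) :
    ∃ C, ∀ N : ℕ, ∀ y : ℂ, ‖y‖ = q ^ N * R →
      q ^ N * R * ‖y ^ n * (qTheta q (a / y) / qTheta q (b / y)) *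
        (qPochInf q (b / y) / qPochInf q (c / y)) / y‖ ≤ C * (‖a‖ / ‖b‖ * q ^ n) ^ N := by
  have hR : 0 < R := (norm_nonneg b).trans_lt hbR
  obtain ⟨C₁, hC₁⟩ := exists_norm_qTheta_div_qTheta_le hq0 hq1 ha hbR hqRb
  obtain ⟨C₂, hC₂⟩ := exists_norm_qPochInf_div_qPochInf_le hq0 hq1 hcR hqRb hbc
  refine ⟨R ^ n * C₁ * C₂, fun N y hy => ?_⟩
  have hyR : 0 < q ^ N * R := by positivity
  have hT := hC₁ N y hy
  have hP := hC₂ N y hy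
  calc _ = (q ^ N * R) ^ n * ‖qTheta q (a / y) / qTheta q (b / y)‖ *
        ‖qPochInf q (b / y) / qPochInf q (c / y)‖ := by
        rw [norm_div, norm_mul, norm_mul, norm_pow, hy]
        field_simp
    _ ≤ (q ^ N * R) ^ n * ((‖a‖ / ‖b‖) ^ N * C₁) * C₂ := by
        have := (norm_nonneg _).trans hT
        gcongr
    _ = R ^ n * C₁ * C₂ * (‖a‖ / ‖b‖ * q ^ n) ^ N := by
        rw [mul_pow, mul_pow, ← pow_mul, ← pow_mul, mul_comm N n]
        ring

theorem tendsto_circleIntegral_of_norm_le {f : ℕ → ℂ → ℂ} {r ε : ℕ → ℝ} (hr : ∀ N, 0 < r N)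
    (hf : ∀ N, ∀ y : ℂ, ‖y‖ = r N → r N * ‖f N y‖ ≤ ε N) (hε : Tendsto ε atTop (nhds 0)) :
    Tendsto (fun N => 1 / (2 * (Real.pi : ℂ) * I) * ∮ y in C(0, r N), f N y) atTop (nhds 0) := by
  refine squeeze_zero_norm (fun N => ?_) hε
  rw [one_div, ← smul_eq_mul]
  refine (circleIntegral.norm_two_pi_i_inv_smul_integral_le_of_norm_le_const (hr N).le
    (C := ε N / r N) fun y hy => ?_).trans_eq (mul_div_cancel₀ _ (hr N).ne')
  rw [le_div_iff₀ (hr N), mul_comm]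
  exact hf N y (mem_sphere_zero_iff_norm.1 hy)

theorem norm_qpow {q : ℝ} (hq0 : 0 < q) (x : ℂ) : ‖qpow q x‖ = q ^ x.re := by
  rw [qpow, norm_exp, Real.rpow_def_of_pos hq0, mul_comm]
  simp

theorem qpow_ne_zero (q : ℝ) (x : ℂ) : qpow q x ≠ 0 := exp_ne_zero _

theorem stmt13_general (q k : ℝ) (hq0 : 0 < q) (hq1 : q < 1) (hk0 : 0 < k)
    (n : ℕ) (lam1 lam2 : ℂ) (hre : 0 < (lam2 - lam1).re + n)
    (R : ℝ) (hR1 : q ^ ((1 - k) / 2) < R) (hR2 : R < q ^ ((k - 1) / 2)) :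
    Filter.Tendsto (fun N : ℕ =>
      (1 / (2 * (Real.pi : ℂ) * Complex.I)) *
        (∮ y in C(0, q ^ N * R),
          y ^ n *
            (qTheta q (qpow q (lam2 - lam1 + (k + 1) / 2) / y) /
              qTheta q (qpow q ((1 + k) / 2) / y)) *
            (qPochInf q (qpow q ((1 + k) / 2) / y) /
              qPochInf q (qpow q ((1 - k) / 2) / y)) / y))
      Filter.atTop (nhds 0) := by
  have ha : ‖qpow q (lam2 - lam1 + (k + 1) / 2)‖ = q ^ ((lam2 - lam1).re + (k + 1) / 2) := by
    simp [norm_qpow hq0]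
  have hb : ‖qpow q ((1 + k) / 2)‖ = q ^ ((1 + k) / 2) := by simp [norm_qpow hq0]
  have hc : ‖qpow q ((1 - k) / 2)‖ = q ^ ((1 - k) / 2) := by simp [norm_qpow hq0]
  have hbc : q ^ ((1 + k) / 2) < q ^ ((1 - k) / 2) :=
    Real.rpow_lt_rpow_of_exponent_gt hq0 hq1 (by linarith)
  have hqRb : q * R < q ^ ((1 + k) / 2) := by
    calc q * R < q * q ^ ((k - 1) / 2) := by gcongr
      _ = q ^ ((1 + k) / 2) := by rw [← Real.rpow_one_add' hq0.le (by linarith)]; ring_nf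
  obtain ⟨C, hC⟩ := exists_norm_integrand_le hq0 hq1 n (qpow_ne_zero _ _) (hb ▸ hbc.trans hR1)
    (hb ▸ hqRb) (hc ▸ hR1) (hb ▸ hc ▸ hbc.le)
  have hratio : ‖qpow q (lam2 - lam1 + (k + 1) / 2)‖ / ‖qpow q ((1 + k) / 2)‖ * q ^ n =
      q ^ ((lam2 - lam1).re + n) := by
    rw [ha, hb, ← Real.rpow_sub hq0, ← Real.rpow_natCast, ← Real.rpow_add hq0]
    ring_nf
  have hR : 0 < R := (Real.rpow_pos_of_pos hq0 _).trans hR1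
  refine tendsto_circleIntegral_of_norm_le (fun N => by positivity) hC ?_
  rw [hratio, ← mul_zero C]
  exact (tendsto_pow_atTop_nhds_zero_of_lt_one (by positivity)
    (Real.rpow_lt_one hq0.le hq1 hre)).const_mul C

/-- The contour integrals over shrinking circles `|y| = q^N R` tend to zero. -/
theorem stmt13 (q k : ℝ) (hq0 : 0 < q) (hq1 : q < 1) (hk0 : 0 < k) (hk1 : k < 1)
    (n : ℕ) (lam1 lam2 : ℂ) (hre : 0 < (lam2 - lam1).re + n)
    (R : ℝ) (hR1 : q ^ ((1 - k) / 2) < R) (hR2 : R < q ^ ((k - 1) / 2)) :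
    Filter.Tendsto (fun N : ℕ =>
      (1 / (2 * (Real.pi : ℂ) * Complex.I)) *
        (∮ y in C(0, q ^ N * R),
          y ^ n *
            (qTheta q (qpow q (lam2 - lam1 + (k + 1) / 2) / y) /
              qTheta q (qpow q ((1 + k) / 2) / y)) *
            (qPochInf q (qpow q ((1 + k) / 2) / y) /
              qPochInf q (qpow q ((1 - k) / 2) / y)) / y))
      Filter.atTop (nhds 0) :=
  stmt13_general q k hq0 hq1 hk0 n lam1 lam2 hre R hR1 hR2
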